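/- arXiv:1702.06587 — 4 statements merged into one kernel-verified Lean document; each statement's English description precedes it below -/
import Mathlib

section
/- If L₁ and L₂ are linear orders that satisfy the same first-order sentences, then for any linear orders P and Q, the sums P + L₁ + Q and P + L₂ + Q satisfy the same first-order sentences (in the language of linear orders). -/
open FirstOrder Language

attribute [local instance] FirstOrder.Language.orderStructure

/-!
Write `A ≡ₖ B` when Duplicator wins the `k`-round Ehrenfeucht–Fraïssé game on `A` and `B`.
Elementary equivalence is `≡ₖ` for every `k`: a formula of quantifier depth `k` cannot separate
positions from which Duplicator wins the `k`-round game, and conversely the Hintikka formula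
describing the `k`-type of `A` (there are only finitely many `k`-types) is a sentence which
holds in `B` only if `A ≡ₖ B`. Finally `≡ₖ` is a congruence for ordered sums: Duplicator
answers a move in either summand with her winning strategy on that summand.
-/

namespace FirstOrder.Language.BoundedFormula

def quantifierDepth {L : Language} {α : Type*} : {n : ℕ} → L.BoundedFormula α n → ℕ
  | _, falsum => 0
  | _, equal _ _ => 0
  | _, rel _ _ => 0
  | _, imp φ ψ => max φ.quantifierDepth ψ.quantifierDepth
  | _, all φ => φ.quantifierDepth + 1

end FirstOrder.Language.BoundedFormula

namespace FirstOrder.Language.order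

instance (M : Type*) [LE M] : Language.order.OrderedStructure M :=
  ⟨fun _ => Iff.rfl⟩

section Game

variable {A B : Type*} [LE A] [LE B]

def IsPartialIso {n : ℕ} (xs : Fin n → A) (ys : Fin n → B) : Prop :=
  ∀ i j, xs i ≤ xs j ↔ ys i ≤ ys j

/-- Duplicator wins the `k`-round Ehrenfeucht–Fraïssé game from the position `xs`, `ys`.
Asking for a partial isomorphism after every round, not only after the last one, makes this
antitone in `k` also when `A` or `B` is empty. -/
def EFEquiv : ℕ → {n : ℕ} → (Fin n → A) → (Fin n → B) → Prop
  | 0, _, xs, ys => IsPartialIso xs ys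
  | k + 1, _, xs, ys => IsPartialIso xs ys ∧
      (∀ a, ∃ b, EFEquiv k (Fin.snoc xs a) (Fin.snoc ys b)) ∧
      (∀ b, ∃ a, EFEquiv k (Fin.snoc xs a) (Fin.snoc ys b))

variable (A B) in
def EFEquivalent (k : ℕ) : Prop :=
  EFEquiv k (default : Fin 0 → A) (default : Fin 0 → B)

namespace EFEquiv

variable {k n : ℕ} {xs : Fin n → A} {ys : Fin n → B}

theorem isPartialIso (h : EFEquiv k xs ys) : IsPartialIso xs ys := by
  cases k
  exacts [h, h.1]

theorem of_succ (h : EFEquiv (k + 1) xs ys) : EFEquiv k xs ys := by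
  induction k generalizing n with
  | zero => exact h.1
  | succ k ih =>
    obtain ⟨hiso, forth, back⟩ := h
    exact ⟨hiso, fun a => (forth a).imp fun _ => ih, fun b => (back b).imp fun _ => ih⟩

theorem refl (k : ℕ) (xs : Fin n → A) : EFEquiv k xs xs := by
  induction k generalizing n with
  | zero => exact fun _ _ => Iff.rfl
  | succ k ih => exact ⟨fun _ _ => Iff.rfl, fun a => ⟨a, ih _⟩, fun b => ⟨b, ih _⟩⟩

end EFEquiv

theorem EFEquivalent.refl (k : ℕ) : EFEquivalent A A k :=
  EFEquiv.refl k _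

end Game

section LexSum

variable {A A' B B' : Type*} {k n m₁ m₂ : ℕ}

theorem snoc_toLex_inl (c : Fin n → Fin m₁ ⊕ Fin m₂) (f : Fin m₁ → A) (g : Fin m₂ → B)
    (a : A) :
    Fin.snoc (toLex ∘ Sum.map f g ∘ c) (toLex (Sum.inl a)) =
      toLex ∘ Sum.map (Fin.snoc f a) g ∘
        Fin.snoc (Sum.map Fin.castSucc id ∘ c) (Sum.inl (Fin.last m₁)) := by
  funext i
  induction i using Fin.lastCases with
  | last => simp
  | cast i => rcases c i with j | j <;> simp [*]

theorem snoc_toLex_inr (c : Fin n → Fin m₁ ⊕ Fin m₂) (f : Fin m₁ → A) (g : Fin m₂ → B)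
    (b : B) :
    Fin.snoc (toLex ∘ Sum.map f g ∘ c) (toLex (Sum.inr b)) =
      toLex ∘ Sum.map f (Fin.snoc g b) ∘
        Fin.snoc (Sum.map id Fin.castSucc ∘ c) (Sum.inr (Fin.last m₂)) := by
  funext i
  induction i using Fin.lastCases with
  | last => simp
  | cast i => rcases c i with j | j <;> simp [*]

variable [LE A] [LE A'] [LE B] [LE B'] {c : Fin n → Fin m₁ ⊕ Fin m₂}
  {f : Fin m₁ → A} {f' : Fin m₁ → A'} {g : Fin m₂ → B} {g' : Fin m₂ → B'}

theorem IsPartialIso.lexSum (hf : IsPartialIso f f') (hg : IsPartialIso g g') :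
    IsPartialIso (toLex ∘ Sum.map f g ∘ c) (toLex ∘ Sum.map f' g' ∘ c) := by
  intro i j
  simp only [Function.comp_apply]
  rcases c i with a | b <;> rcases c j with a' | b'
  · simpa using hf a a'
  · simp
  · simp
  · simpa using hg b b'

theorem EFEquiv.lexSum (hf : EFEquiv k f f') (hg : EFEquiv k g g') :
    EFEquiv k (toLex ∘ Sum.map f g ∘ c) (toLex ∘ Sum.map f' g' ∘ c) := by
  induction k generalizing n m₁ m₂ with
  | zero => exact hf.lexSum hg
  | succ k ih =>
    refine ⟨hf.isPartialIso.lexSum hg.isPartialIso, fun x => ?_, fun x => ?_⟩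
    · obtain ⟨a | b, rfl⟩ := toLex.surjective x
      · obtain ⟨a', ha'⟩ := hf.2.1 a
        refine ⟨toLex (.inl a'), ?_⟩
        rw [snoc_toLex_inl, snoc_toLex_inl]
        exact ih ha' hg.of_succ
      · obtain ⟨b', hb'⟩ := hg.2.1 b
        refine ⟨toLex (.inr b'), ?_⟩
        rw [snoc_toLex_inr, snoc_toLex_inr]
        exact ih hf.of_succ hb'
    · obtain ⟨a' | b', rfl⟩ := toLex.surjective x
      · obtain ⟨a, ha⟩ := hf.2.2 a'
        refine ⟨toLex (.inl a), ?_⟩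
        rw [snoc_toLex_inl, snoc_toLex_inl]
        exact ih ha hg.of_succ
      · obtain ⟨b, hb⟩ := hg.2.2 b'
        refine ⟨toLex (.inr b), ?_⟩
        rw [snoc_toLex_inr, snoc_toLex_inr]
        exact ih hf.of_succ hb

theorem EFEquivalent.lexSum (hA : EFEquivalent A A' k) (hB : EFEquivalent B B' k) :
    EFEquivalent (A ⊕ₗ B) (A' ⊕ₗ B') k := by
  unfold EFEquivalent
  convert EFEquiv.lexSum (c := Fin.elim0) hA hB

end LexSum

section Hintikka

abbrev AtomicType (n : ℕ) : Type := Fin n → Fin n → Prop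

/-- The first component of `HintikkaType (k + 1) n` is the atomic type of a tuple, the second the
set of `k`-types of its one-point extensions. -/
@[reducible] def HintikkaType : ℕ → ℕ → Type
  | 0, n => AtomicType n
  | k + 1, n => AtomicType n × Set (HintikkaType k (n + 1))

instance HintikkaType.finite : ∀ k n, Finite (HintikkaType k n)
  | 0, n => inferInstanceAs (Finite (AtomicType n))
  | k + 1, n =>
    have := HintikkaType.finite k (n + 1)
    inferInstanceAs (Finite (AtomicType n × Set (HintikkaType k (n + 1))))

variable {A B : Type*} [LE A] [LE B]

def atomicType {n : ℕ} (xs : Fin n → A) : AtomicType n :=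
  fun i j => xs i ≤ xs j

variable (A) in
def hintikkaType : (k : ℕ) → {n : ℕ} → (Fin n → A) → HintikkaType k n
  | 0, _, xs => atomicType xs
  | k + 1, _, xs => (atomicType xs, Set.range fun a => hintikkaType k (Fin.snoc xs a))

open Classical in
noncomputable def atomicFormula {n : ℕ} (t : AtomicType n) :
    Language.order.BoundedFormula Empty n :=
  BoundedFormula.iInf fun p : Fin n × Fin n =>
    if t p.1 p.2 then (Term.var (Sum.inr p.1)).le (Term.var (Sum.inr p.2))
    else ∼((Term.var (Sum.inr p.1)).le (Term.var (Sum.inr p.2)))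

noncomputable def hintikkaFormula : (k : ℕ) → {n : ℕ} → HintikkaType k n →
    Language.order.BoundedFormula Empty n
  | 0, _, t => atomicFormula t
  | k + 1, _, (t₀, s) => atomicFormula t₀ ⊓
      BoundedFormula.iInf (fun t : s => (hintikkaFormula k t.1).ex) ⊓
      (BoundedFormula.iSup fun t : s => hintikkaFormula k t.1).all

theorem realize_atomicFormula {n : ℕ} (t : AtomicType n) (v : Empty → A) (xs : Fin n → A) :
    (atomicFormula t).Realize v xs ↔ atomicType xs = t := by
  simp only [atomicFormula, BoundedFormula.realize_iInf, Prod.forall, funext_iff, eq_iff_iff]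
  refine forall₂_congr fun i j => ?_
  by_cases h : t i j <;> simp [h, atomicType]

theorem realize_hintikkaFormula {k n : ℕ} (t : HintikkaType k n) (v : Empty → A)
    (xs : Fin n → A) : (hintikkaFormula k t).Realize v xs ↔ hintikkaType A k xs = t := by
  induction k generalizing n with
  | zero => exact realize_atomicFormula t v xs
  | succ k ih =>
    obtain ⟨t₀, s⟩ := t
    simp only [hintikkaFormula, hintikkaType, BoundedFormula.realize_inf, realize_atomicFormula,
      BoundedFormula.realize_iInf, BoundedFormula.realize_ex, BoundedFormula.realize_all,
      BoundedFormula.realize_iSup, ih, Prod.mk.injEq]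
    rw [and_assoc, Set.Subset.antisymm_iff, Set.range_subset_iff, and_comm (a := ∀ _, _)]
    simp only [Subtype.forall, Subtype.exists, exists_prop, exists_eq_right', Set.subset_def,
      Set.mem_range]

theorem atomicType_eq_iff {n : ℕ} {xs : Fin n → A} {ys : Fin n → B} :
    atomicType xs = atomicType ys ↔ IsPartialIso xs ys := by
  simp only [atomicType, funext_iff, eq_iff_iff, IsPartialIso]

theorem EFEquiv.of_hintikkaType_eq {k n : ℕ} {xs : Fin n → A} {ys : Fin n → B}
    (h : hintikkaType A k xs = hintikkaType B k ys) : EFEquiv k xs ys := by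
  induction k generalizing n with
  | zero => exact atomicType_eq_iff.1 h
  | succ k ih =>
    simp only [hintikkaType, Prod.mk.injEq] at h
    obtain ⟨hatomic, hrange⟩ := h
    refine ⟨atomicType_eq_iff.1 hatomic, fun a => ?_, fun b => ?_⟩
    · obtain ⟨b, hb⟩ : hintikkaType A k (Fin.snoc xs a) ∈ Set.range _ :=
        hrange ▸ Set.mem_range_self a
      exact ⟨b, ih hb.symm⟩
    · obtain ⟨a, ha⟩ : hintikkaType B k (Fin.snoc ys b) ∈ Set.range _ :=
        hrange.symm ▸ Set.mem_range_self b
      exact ⟨a, ih ha⟩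

end Hintikka

section Semantics

theorem exists_term_eq_var {n : ℕ} (t : Language.order.Term (Empty ⊕ Fin n)) :
    ∃ i, t = Term.var (Sum.inr i) := by
  rcases t with (e | i) | ⟨f, _⟩
  exacts [e.elim, ⟨i, rfl⟩, isEmptyElim f]

variable {A B : Type*} [PartialOrder A] [PartialOrder B]

theorem EFEquiv.realize_iff {n k : ℕ} {xs : Fin n → A} {ys : Fin n → B}
    (φ : Language.order.BoundedFormula Empty n) (hφ : φ.quantifierDepth ≤ k)
    (h : EFEquiv k xs ys) (v : Empty → A) (w : Empty → B) :
    φ.Realize v xs ↔ φ.Realize w ys := by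
  induction φ generalizing k with
  | falsum => rfl
  | equal t₁ t₂ =>
    obtain ⟨i, rfl⟩ := exists_term_eq_var t₁
    obtain ⟨j, rfl⟩ := exists_term_eq_var t₂
    simp only [BoundedFormula.Realize, Term.realize_var, Sum.elim_inr, le_antisymm_iff,
      h.isPartialIso i j, h.isPartialIso j i]
  | rel R ts =>
    cases R
    obtain ⟨i, hi⟩ := exists_term_eq_var (ts 0)
    obtain ⟨j, hj⟩ := exists_term_eq_var (ts 1)
    show (ts 0).realize _ ≤ (ts 1).realize _ ↔ (ts 0).realize _ ≤ (ts 1).realize _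
    simpa only [hi, hj, Term.realize_var, Sum.elim_inr] using h.isPartialIso i j
  | imp φ ψ ihφ ihψ =>
    rw [BoundedFormula.quantifierDepth, max_le_iff] at hφ
    simp only [BoundedFormula.realize_imp, ihφ hφ.1 h, ihψ hφ.2 h]
  | all φ ih =>
    rw [BoundedFormula.quantifierDepth] at hφ
    obtain _ | k := k
    · exact absurd hφ (Nat.not_succ_le_zero _)
    obtain ⟨-, forth, back⟩ := h
    have hφ := Nat.le_of_succ_le_succ hφ
    simp only [BoundedFormula.realize_all]
    constructor
    · intro H b
      obtain ⟨a, ha⟩ := back b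
      exact (ih hφ ha).1 (H a)
    · intro H a
      obtain ⟨b, hb⟩ := forth a
      exact (ih hφ hb).2 (H b)

theorem elementarilyEquivalent_iff_forall_efEquivalent :
    Language.order.ElementarilyEquivalent A B ↔ ∀ k, EFEquivalent A B k := by
  rw [elementarilyEquivalent_iff]
  refine ⟨fun h k => EFEquiv.of_hintikkaType_eq ?_, fun h φ => ?_⟩
  · have hA : A ⊨ (hintikkaFormula k (hintikkaType A k default) : Language.order.Sentence) :=
      (realize_hintikkaFormula _ default default).2 rfl
    exact ((realize_hintikkaFormula _ default default).1 ((h _).1 hA)).symm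
  · exact (h φ.quantifierDepth).realize_iff φ le_rfl default default

end Semantics

end FirstOrder.Language.order

/-- If the linear orders `L₁` and `L₂` satisfy the same first-order sentences (in the language
of orders), then for any linear orders `P` and `Q`, the sums `P + L₁ + Q` and `P + L₂ + Q`
satisfy the same first-order sentences. -/
theorem sum_elementarilyEquivalent_of_middle
    (P L₁ L₂ Q : Type) [LinearOrder P] [LinearOrder L₁] [LinearOrder L₂] [LinearOrder Q]
    (h : Language.order.ElementarilyEquivalent L₁ L₂) :
    Language.order.ElementarilyEquivalent (P ⊕ₗ L₁ ⊕ₗ Q) (P ⊕ₗ L₂ ⊕ₗ Q) := by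
  rw [order.elementarilyEquivalent_iff_forall_efEquivalent] at h ⊢
  exact fun k => (order.EFEquivalent.refl k).lexSum ((h k).lexSum (order.EFEquivalent.refl k))
end

section
/- Let A₁,…,A_k be structures in pairwise disjoint relational languages and let B be their disjoint union with unary predicates R₁,…,R_k picking out the respective domains. Then every first-order formula in the language of B is equivalent in B to a Boolean combination of formulas each of which only involves quantifiers relativized to a single sort R_i and only relations of the corresponding A_i. -/
open FirstOrder Language

namespace Stmt5

variable (k : ℕ) (Ls : Fin k → FirstOrder.Language) [∀ i, (Ls i).IsRelational]

/-- The language of the disjoint union of structures `A₁, …, A_k` in pairwise disjoint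
relational languages `Ls 1, …, Ls k`, with additional unary predicates `R_i` picking out the
domains. -/
def bigLang : FirstOrder.Language :=
  ⟨fun _ => Empty, fun n => (Σ i : Fin k, (Ls i).Relations n) ⊕ (PLift (n = 1) × Fin k)⟩

variable (A : Fin k → Type) [∀ i, (Ls i).Structure (A i)]

/-- The disjoint union structure: relations of `A_i` are interpreted on the `i`-th component
only (false otherwise), and `R_i` is the unary predicate for the domain of `A_i`. -/
def bigStruct : (bigLang k Ls).Structure (Σ i, A i) where
  funMap := fun f _ => f.elim
  RelMap := fun {n} r v =>
    match r with
    | Sum.inl ⟨i, r⟩ =>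
        ∃ w : Fin n → A i, (∀ j, v j = ⟨i, w j⟩) ∧ Structure.RelMap r w
    | Sum.inr ⟨_, i⟩ => ∀ j : Fin n, (v j).1 = i

variable {k Ls}

/-- `IsRel i φ`: `φ` is an `A_i`-formula, i.e. all its quantifiers are relativized to the
sort `R_i` and its non-logical symbols come from the language of `A_i` together with `R_i`. -/
inductive IsRel {α : Type} (i : Fin k) : ∀ {n : ℕ}, (bigLang k Ls).BoundedFormula α n → Prop
  | falsum {n} : IsRel i (.falsum : (bigLang k Ls).BoundedFormula α n)
  | equal {n} (t₁ t₂ : (bigLang k Ls).Term (α ⊕ Fin n)) : IsRel i (.equal t₁ t₂)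
  | rel {n m} (r : (Ls i).Relations m)
      (ts : Fin m → (bigLang k Ls).Term (α ⊕ Fin n)) :
      IsRel i (.rel (Sum.inl ⟨i, r⟩) ts)
  | relR {n} (ts : Fin 1 → (bigLang k Ls).Term (α ⊕ Fin n)) :
      IsRel i (.rel (Sum.inr ⟨PLift.up rfl, i⟩) ts)
  | imp {n} {φ ψ : (bigLang k Ls).BoundedFormula α n} :
      IsRel i φ → IsRel i ψ → IsRel i (φ.imp ψ)
  | all {n} {φ : (bigLang k Ls).BoundedFormula α (n + 1)} :
      IsRel i φ →
      IsRel i (((BoundedFormula.rel (Sum.inr ⟨PLift.up rfl, i⟩)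
        (fun _ => Term.var (Sum.inr (Fin.last n)))).imp φ).all)

/-- `IsBC φ`: `φ` is a Boolean combination of `A_i`-formulas (for varying `i`). -/
inductive IsBC {α : Type} : ∀ {n : ℕ}, (bigLang k Ls).BoundedFormula α n → Prop
  | of {n} (i : Fin k) {φ : (bigLang k Ls).BoundedFormula α n} : IsRel i φ → IsBC φ
  | falsum {n} : IsBC (.falsum : (bigLang k Ls).BoundedFormula α n)
  | imp {n} {φ ψ : (bigLang k Ls).BoundedFormula α n} : IsBC φ → IsBC ψ → IsBC (φ.imp ψ)

/-!
By induction on formulas it suffices to eliminate a quantifier `∀ x, ψ` with `ψ` a Boolean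
combination of sorted formulas, and `∀ x` splits as `⋀ᵢ ∀ x ∈ Rᵢ`. Fix the sort `i` of `x`.
In an `A_{i'}`-formula with `i' ≠ i` the quantified variables and the relations live in sort `i'`,
so every atom involving `x` is constant except equations `x = y` with `y` free in the formula. Such
a formula is therefore a decision tree whose tests are these `A_i`-equations and whose leaves are
`A_{i'}`-formulas not involving `x`; the tree survives the relativized quantifiers of sort `i'`
because they act on the leaves only. Transposing these trees turns `ψ` into a decision tree whose
tests are Boolean combinations of sorted formulas not involving `x` and whose leaves are
`A_i`-formulas, and now `∀ x ∈ Rᵢ` passes to the leaves.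
-/

inductive CaseTree (C L : Type*) where
  | leaf : L → CaseTree C L
  | node : C → CaseTree C L → CaseTree C L → CaseTree C L

namespace CaseTree

variable {C L L' X : Type*}

def fold (f : C → X → X → X) (g : L → X) : CaseTree C L → X
  | leaf a => g a
  | node d t u => f d (fold f g t) (fold f g u)

def bind (t : CaseTree C L) (g : L → CaseTree C L') : CaseTree C L' :=
  t.fold node g

def map (g : L → L') (t : CaseTree C L) : CaseTree C L' :=
  t.bind (leaf ∘ g)

def zipWith (f : L → L → L) (t u : CaseTree C L) : CaseTree C L :=
  t.bind fun a => u.map (f a)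

def Eval (c : C → Prop) (l : L → Prop) : CaseTree C L → Prop
  | leaf a => l a
  | node d t u => (c d → t.Eval c l) ∧ (¬ c d → u.Eval c l)

def Labels (P : C → Prop) (Q : L → Prop) : CaseTree C L → Prop
  | leaf a => Q a
  | node d t u => P d ∧ t.Labels P Q ∧ u.Labels P Q

variable {c : C → Prop} {l : L → Prop} {P : C → Prop} {Q : L → Prop}

theorem fold_spec (x : X → Prop) {f : C → X → X → X} {g : L → X}
    (hf : ∀ d p q, x (f d p q) ↔ (c d → x p) ∧ (¬ c d → x q)) (hg : ∀ a, x (g a) ↔ l a)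
    (t : CaseTree C L) : x (t.fold f g) ↔ t.Eval c l := by
  induction t with
  | leaf a => exact hg a
  | node d t u iht ihu => rw [fold, hf, iht, ihu, Eval]

theorem labels_fold (R : X → Prop) {f : C → X → X → X} {g : L → X}
    (hf : ∀ d p q, P d → R p → R q → R (f d p q)) (hg : ∀ a, Q a → R (g a))
    {t : CaseTree C L} (ht : t.Labels P Q) : R (t.fold f g) := by
  induction t with
  | leaf a => exact hg a ht
  | node d t u iht ihu => exact hf d _ _ ht.1 (iht ht.2.1) (ihu ht.2.2)

theorem eval_bind {l' : L' → Prop} (t : CaseTree C L) (g : L → CaseTree C L') :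
    (t.bind g).Eval c l' ↔ t.Eval c fun a => (g a).Eval c l' :=
  fold_spec (Eval c l') (fun _ _ _ => Iff.rfl) (fun _ => Iff.rfl) t

theorem labels_bind {Q' : L' → Prop} {t : CaseTree C L} (ht : t.Labels P Q)
    {g : L → CaseTree C L'} (hg : ∀ a, Q a → (g a).Labels P Q') : (t.bind g).Labels P Q' :=
  labels_fold (Labels P Q') (f := node) (fun _ _ _ hd hp hq => ⟨hd, hp, hq⟩) hg ht

theorem eval_map {l' : L' → Prop} (g : L → L') (t : CaseTree C L) :
    (t.map g).Eval c l' ↔ t.Eval c (l' ∘ g) :=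
  eval_bind t _

theorem labels_map {Q' : L' → Prop} {t : CaseTree C L} (ht : t.Labels P Q)
    {g : L → L'} (hg : ∀ a, Q a → Q' (g a)) : (t.map g).Labels P Q' :=
  labels_bind ht hg

/-- Only one branch of the tree is ever evaluated. -/
theorem eval_comp (g : Prop → Prop) (t : CaseTree C L) :
    t.Eval c (fun a => g (l a)) ↔ g (t.Eval c l) := by
  induction t with
  | leaf a => rfl
  | node d t u iht ihu => by_cases hd : c d <;> simp [Eval, hd, iht, ihu]

theorem eval_forall {Z : Sort*} (l : Z → L → Prop) (t : CaseTree C L) :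
    t.Eval c (fun a => ∀ z, l z a) ↔ ∀ z, t.Eval c (l z) := by
  induction t with
  | leaf a => rfl
  | node d t u iht ihu =>
    simp only [Eval, iht, ihu, forall_and]
    exact and_congr forall_comm forall_comm

theorem eval_zipWith {f : L → L → L} (g : Prop → Prop → Prop)
    (hf : ∀ a b, l (f a b) ↔ g (l a) (l b)) (t u : CaseTree C L) :
    (t.zipWith f u).Eval c l ↔ g (t.Eval c l) (u.Eval c l) := by
  have hu : ∀ a, (u.Eval c fun b => g (l a) (l b)) ↔ g (l a) (u.Eval c l) :=
    fun a => eval_comp (g (l a)) u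
  simp only [zipWith, eval_bind, eval_map, Function.comp_def, hf, hu]
  exact eval_comp (g · (u.Eval c l)) t

theorem labels_zipWith {f : L → L → L} (hf : ∀ a b, Q a → Q b → Q (f a b))
    {t u : CaseTree C L} (ht : t.Labels P Q) (hu : u.Labels P Q) :
    (t.zipWith f u).Labels P Q :=
  labels_bind ht fun a ha => labels_map hu (hf a · ha)

theorem Labels.mono {P' : C → Prop} {Q' : L → Prop} (hP : ∀ d, P d → P' d)
    (hQ : ∀ a, Q a → Q' a) {t : CaseTree C L} (ht : t.Labels P Q) : t.Labels P' Q' := by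
  induction t with
  | leaf a => exact hQ a ht
  | node d t u iht ihu => exact ⟨hP d ht.1, iht ht.2.1, ihu ht.2.2⟩

def transpose (ite : C → C → C → C) (top bot : C) (t : CaseTree C L) : CaseTree L C :=
  t.fold (fun d t u => t.zipWith (ite d) u) fun a => node a (leaf top) (leaf bot)

theorem eval_transpose {ite : C → C → C → C} {top bot : C}
    (hite : ∀ d p q, c (ite d p q) ↔ (c d → c p) ∧ (¬ c d → c q)) (htop : c top)
    (hbot : ¬ c bot) (t : CaseTree C L) : (t.transpose ite top bot).Eval l c ↔ t.Eval c l :=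
  fold_spec (Eval l c)
    (fun d _ _ => eval_zipWith (fun p q => (c d → p) ∧ (¬ c d → q)) (hite d) _ _)
    (fun a => by by_cases ha : l a <;> simp [Eval, ha, htop, hbot]) t

theorem labels_transpose {ite : C → C → C → C} {top bot : C}
    (hite : ∀ d p q, P d → P p → P q → P (ite d p q)) (htop : P top) (hbot : P bot)
    {t : CaseTree C L} (ht : t.Labels P Q) : (t.transpose ite top bot).Labels Q P :=
  labels_fold (Labels Q P) (fun d _ _ hd ht hu => labels_zipWith (hite d · · hd) ht hu)
    (g := fun a => node a (leaf top) (leaf bot)) (fun _ ha => ⟨ha, htop, hbot⟩) ht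

end CaseTree

section IfThenElse

variable {L : Language} {M : Type*} [L.Structure M] {β : Type*} {n : ℕ} {v : β → M}
  {xs : Fin n → M}

def ifThenElse (d p q : L.BoundedFormula β n) : L.BoundedFormula β n :=
  (d.imp p) ⊓ (d.not.imp q)

theorem realize_ifThenElse {d p q : L.BoundedFormula β n} :
    (ifThenElse d p q).Realize v xs ↔
      (d.Realize v xs → p.Realize v xs) ∧ (¬ d.Realize v xs → q.Realize v xs) := by
  simp [ifThenElse]

def CaseTree.toFormula (t : CaseTree (L.BoundedFormula β n) (L.BoundedFormula β n)) :
    L.BoundedFormula β n :=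
  t.fold ifThenElse id

theorem CaseTree.realize_toFormula (t : CaseTree (L.BoundedFormula β n) (L.BoundedFormula β n)) :
    t.toFormula.Realize v xs ↔ t.Eval (·.Realize v xs) (·.Realize v xs) :=
  fold_spec (BoundedFormula.Realize · v xs) (fun _ _ _ => realize_ifThenElse) (fun _ => Iff.rfl) t

end IfThenElse

section Separation

omit [∀ i, (Ls i).IsRelational]

variable {A} {α : Type}

def relAll (i : Fin k) {n : ℕ} (φ : (bigLang k Ls).BoundedFormula α (n + 1)) :
    (bigLang k Ls).BoundedFormula α n :=
  ((BoundedFormula.rel (Sum.inr (⟨PLift.up rfl, i⟩ : PLift (1 = 1) × Fin k))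
    fun _ => Term.var (Sum.inr (Fin.last n))).imp φ).all

theorem term_eq_var {β : Type} (t : (bigLang k Ls).Term β) : ∃ u, t = Term.var u := by
  cases t with
  | var u => exact ⟨u, rfl⟩
  | func f _ => exact f.elim

section BooleanClosure

variable {i : Fin k} {n : ℕ} {φ ψ χ : (bigLang k Ls).BoundedFormula α n}

theorem IsRel.not (h : IsRel i φ) : IsRel i φ.not :=
  h.imp .falsum

theorem IsRel.top : IsRel i (⊤ : (bigLang k Ls).BoundedFormula α n) :=
  IsRel.falsum.not

theorem IsRel.inf (hφ : IsRel i φ) (hψ : IsRel i ψ) : IsRel i (φ ⊓ ψ) :=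
  (hφ.imp hψ.not).not

theorem IsRel.ifThenElse (hφ : IsRel i φ) (hψ : IsRel i ψ) (hχ : IsRel i χ) :
    IsRel i (ifThenElse φ ψ χ) :=
  (hφ.imp hψ).inf (hφ.not.imp hχ)

theorem IsBC.not (h : IsBC φ) : IsBC φ.not :=
  h.imp .falsum

theorem IsBC.top : IsBC (⊤ : (bigLang k Ls).BoundedFormula α n) :=
  IsBC.falsum.not

theorem IsBC.inf (hφ : IsBC φ) (hψ : IsBC ψ) : IsBC (φ ⊓ ψ) :=
  (hφ.imp hψ.not).not

theorem IsBC.ifThenElse (hφ : IsBC φ) (hψ : IsBC ψ) (hχ : IsBC χ) :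
    IsBC (ifThenElse φ ψ χ) :=
  (hφ.imp hψ).inf (hφ.not.imp hχ)

theorem IsBC.iInf {β : Type*} [Finite β] {f : β → (bigLang k Ls).BoundedFormula α n}
    (h : ∀ b, IsBC (f b)) : IsBC (BoundedFormula.iInf f) := by
  let _ := Fintype.ofFinite β
  suffices ∀ l : List β, IsBC ((l.map f).foldr (· ⊓ ·) ⊤) from this _
  intro l
  induction l with
  | nil => exact IsBC.top
  | cons b l ih => exact (h b).inf ih

end BooleanClosure

attribute [local instance] bigStruct

theorem realize_relAll {i : Fin k} {n : ℕ} {φ : (bigLang k Ls).BoundedFormula α (n + 1)}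
    {v : α → Σ j, A j} {xs : Fin n → Σ j, A j} :
    (relAll i φ).Realize v xs ↔ ∀ x : Σ j, A j, x.1 = i → φ.Realize v (Fin.snoc xs x) := by
  refine forall_congr' fun x => imp_congr_left ?_
  change (∀ _ : Fin 1, (Fin.snoc (α := fun _ => Σ j, A j) xs x (Fin.last n)).1 = i) ↔ _
  simp

theorem var_cases {n r : ℕ} (u : α ⊕ Fin (n + 1 + r)) :
    u = Sum.inr (Fin.castAdd r (Fin.last n)) ∨ (∃ j, u = Sum.inr (Fin.natAdd (n + 1) j)) ∨
      ∃ w : α ⊕ Fin n, u = Sum.map id (fun j => Fin.castAdd r j.castSucc) w := by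
  rcases u with a | q
  · exact .inr (.inr ⟨.inl a, rfl⟩)
  · induction q using Fin.addCases with
    | left q =>
      induction q using Fin.lastCases with
      | last => exact .inl rfl
      | cast j => exact .inr (.inr ⟨.inr j, rfl⟩)
    | right j => exact .inr (.inl ⟨j, rfl⟩)

theorem exists_var_eq_of_ne_pivot {M : Type*} {n r : ℕ} {u : α ⊕ Fin (n + 1 + r)}
    (hu : u ≠ Sum.inr (Fin.castAdd r (Fin.last n))) :
    ∃ w : α ⊕ Fin (n + r), ∀ (v : α → M) (ys : Fin n → M) (x : M) (zs : Fin r → M),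
      Sum.elim v (Fin.append ys zs) w = Sum.elim v (Fin.append (Fin.snoc ys x) zs) u := by
  rcases var_cases u with rfl | ⟨j, rfl⟩ | ⟨w, rfl⟩
  · exact (hu rfl).elim
  · exact ⟨.inr (Fin.natAdd n j), by simp⟩
  · exact ⟨Sum.map id (Fin.castAdd r) w, by cases w <;> simp⟩

variable (Ls A) in
/-- The bound variables are the outer ones `ys`, the pivot `x` and the inner ones `zs`, assembled
as `Fin.append (Fin.snoc ys x) zs`. On valuations where `x` has sort `i` and `zs` sort `i'`, `P` is
decided by a tree whose tests are `A_i`-formulas in `ys, x` and whose leaves are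
`A_{i'}`-formulas in `ys, zs`. -/
def DecidedByPivot (i i' : Fin k) (n r : ℕ)
    (P : (α → Σ j, A j) → (Fin n → Σ j, A j) → (Σ j, A j) → (Fin r → Σ j, A j) → Prop) :
    Prop :=
  ∃ t : CaseTree ((bigLang k Ls).BoundedFormula α (n + 1))
      ((bigLang k Ls).BoundedFormula α (n + r)),
    t.Labels (IsRel i) (IsRel i') ∧
      ∀ v ys x zs, x.1 = i → (∀ j, (zs j).1 = i') →
        (P v ys x zs ↔ t.Eval (·.Realize v (Fin.snoc ys x)) (·.Realize v (Fin.append ys zs)))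

namespace DecidedByPivot

variable {i i' : Fin k} {n r : ℕ}
  {P Q : (α → Σ j, A j) → (Fin n → Σ j, A j) → (Σ j, A j) → (Fin r → Σ j, A j) → Prop}

theorem of_iff (hP : DecidedByPivot Ls A i i' n r P)
    (h : ∀ v ys x zs, P v ys x zs ↔ Q v ys x zs) : DecidedByPivot Ls A i i' n r Q := by
  obtain rfl : P = Q := by
    funext v ys x zs
    exact propext (h v ys x zs)
  exact hP

theorem imp (hP : DecidedByPivot Ls A i i' n r P) (hQ : DecidedByPivot Ls A i i' n r Q) :
    DecidedByPivot Ls A i i' n r fun v ys x zs => P v ys x zs → Q v ys x zs := by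
  obtain ⟨t, ht, hPt⟩ := hP
  obtain ⟨u, hu, hQu⟩ := hQ
  refine ⟨t.zipWith BoundedFormula.imp u,
    CaseTree.labels_zipWith (fun _ _ => IsRel.imp) ht hu, fun v ys x zs hx hzs => ?_⟩
  beta_reduce
  rw [hPt v ys x zs hx hzs, hQu v ys x zs hx hzs,
    CaseTree.eval_zipWith (· → ·) fun _ _ => BoundedFormula.realize_imp]

/-- The tests do not involve the inner variables, so the quantifier passes to the leaves. -/
theorem forall_inner
    {P : (α → Σ j, A j) → (Fin n → Σ j, A j) → (Σ j, A j) → (Fin (r + 1) → Σ j, A j) → Prop}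
    (hP : DecidedByPivot Ls A i i' n (r + 1) P) :
    DecidedByPivot Ls A i i' n r fun v ys x zs =>
      ∀ z : Σ j, A j, z.1 = i' → P v ys x (Fin.snoc zs z) := by
  obtain ⟨t, ht, hPt⟩ := hP
  refine ⟨t.map (relAll i'), CaseTree.labels_map ht fun _ => IsRel.all,
    fun v ys x zs hx hzs => ?_⟩
  simp only [CaseTree.eval_map, Function.comp_def, realize_relAll, ← Fin.append_snoc,
    CaseTree.eval_forall]
  refine forall_congr' fun z => forall_congr' fun hz => hPt v ys x _ hx fun j => ?_
  induction j using Fin.lastCases <;> simp [hz, hzs]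

theorem pivot_eq (hne : i ≠ i') (u : α ⊕ Fin (n + 1 + r)) :
    DecidedByPivot Ls A i i' n r fun v ys x zs =>
      x = Sum.elim v (Fin.append (Fin.snoc ys x) zs) u := by
  rcases var_cases u with rfl | ⟨j, rfl⟩ | ⟨w, rfl⟩
  · exact ⟨.leaf ⊤, IsRel.top, by simp [CaseTree.Eval]⟩
  · refine ⟨.leaf ⊥, IsRel.falsum, fun v ys x zs hx hzs => ?_⟩
    simp only [Sum.elim_inr, Fin.append_right, CaseTree.Eval, BoundedFormula.realize_bot,
      iff_false]
    rintro rfl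
    exact hne (hx.symm.trans (hzs j))
  · let pivotEq : (bigLang k Ls).BoundedFormula α (n + 1) :=
      (Term.var (Sum.inr (Fin.last n))).bdEqual (Term.var (Sum.map id Fin.castSucc w))
    refine ⟨.node pivotEq (.leaf ⊤) (.leaf ⊥), ⟨IsRel.equal _ _, IsRel.top, IsRel.falsum⟩,
      fun v ys x zs _ _ => ?_⟩
    cases w <;> simp [CaseTree.Eval, pivotEq]

theorem equal (hne : i ≠ i') (u₁ u₂ : α ⊕ Fin (n + 1 + r)) :
    DecidedByPivot Ls A i i' n r fun v ys x zs =>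
      Sum.elim v (Fin.append (Fin.snoc ys x) zs) u₁ =
        Sum.elim v (Fin.append (Fin.snoc ys x) zs) u₂ := by
  by_cases h₁ : u₁ = Sum.inr (Fin.castAdd r (Fin.last n))
  · subst h₁
    exact (pivot_eq hne u₂).of_iff fun v ys x zs => by simp
  by_cases h₂ : u₂ = Sum.inr (Fin.castAdd r (Fin.last n))
  · subst h₂
    exact (pivot_eq hne u₁).of_iff fun v ys x zs => by simp [eq_comm]
  obtain ⟨w₁, hw₁⟩ := exists_var_eq_of_ne_pivot (M := Σ j, A j) h₁
  obtain ⟨w₂, hw₂⟩ := exists_var_eq_of_ne_pivot (M := Σ j, A j) h₂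
  exact ⟨.leaf ((Term.var w₁).bdEqual (Term.var w₂)), IsRel.equal _ _,
    fun v ys x zs _ _ => by simp [CaseTree.Eval, hw₁ v ys x zs, hw₂ v ys x zs]⟩

theorem rel (hne : i ≠ i') {m : ℕ} (R : (bigLang k Ls).Relations m)
    (hR : ∀ xs : Fin m → Σ j, A j, Structure.RelMap R xs → ∀ q, (xs q).1 = i')
    (hRel : ∀ ts, IsRel i' (BoundedFormula.rel R ts : (bigLang k Ls).BoundedFormula α (n + r)))
    (us : Fin m → α ⊕ Fin (n + 1 + r)) :
    DecidedByPivot Ls A i i' n r fun v ys x zs =>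
      Structure.RelMap R fun q => Sum.elim v (Fin.append (Fin.snoc ys x) zs) (us q) := by
  by_cases hus : ∃ q, us q = Sum.inr (Fin.castAdd r (Fin.last n))
  · obtain ⟨q, hq⟩ := hus
    refine ⟨.leaf ⊥, IsRel.falsum, fun v ys x zs hx _ => ?_⟩
    simp only [CaseTree.Eval, BoundedFormula.realize_bot, iff_false]
    intro hRm
    have := hR _ hRm q
    simp only [hq, Sum.elim_inr, Fin.append_left, Fin.snoc_last] at this
    exact hne (hx.symm.trans this)
  · simp only [not_exists] at hus
    choose w hw using fun q => exists_var_eq_of_ne_pivot (M := Σ j, A j) (hus q)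
    exact ⟨.leaf (BoundedFormula.rel R fun q => Term.var (w q)), hRel _,
      fun v ys x zs _ _ => by
        change _ ↔ Structure.RelMap R fun q => Sum.elim v (Fin.append ys zs) (w q)
        simp only [hw _ v ys x zs]⟩

end DecidedByPivot

theorem IsRel.decidedByPivot {i i' : Fin k} (hne : i ≠ i') {n N : ℕ}
    {φ : (bigLang k Ls).BoundedFormula α N} (hφ : IsRel i' φ) (r : ℕ) (hN : N = n + 1 + r) :
    DecidedByPivot Ls A i i' n r fun v ys x zs =>
      φ.Realize v (Fin.append (Fin.snoc ys x) zs ∘ Fin.cast hN) := by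
  induction hφ generalizing r with
  | falsum => exact ⟨.leaf ⊥, .falsum, fun _ _ _ _ _ _ => Iff.rfl⟩
  | equal t₁ t₂ =>
    subst hN
    obtain ⟨u₁, rfl⟩ := term_eq_var t₁
    obtain ⟨u₂, rfl⟩ := term_eq_var t₂
    exact .equal hne u₁ u₂
  | rel R ts =>
    subst hN
    choose us hus using fun q => term_eq_var (ts q)
    obtain rfl : ts = fun q => Term.var (us q) := funext hus
    exact .rel hne (Sum.inl ⟨_, R⟩) (fun _ ⟨w, hw, _⟩ q => by rw [hw q]) (IsRel.rel R) us
  | relR ts =>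
    subst hN
    choose us hus using fun q => term_eq_var (ts q)
    obtain rfl : ts = fun q => Term.var (us q) := funext hus
    exact .rel hne _ (fun _ h => h) IsRel.relR us
  | imp _ _ ih₁ ih₂ => exact (ih₁ r hN).imp (ih₂ r hN)
  | @all N φ _ ih =>
    subst hN
    refine (ih (r + 1) rfl).forall_inner.of_iff fun v ys x zs => ?_
    simp only [Fin.cast_refl, Function.comp_id, Fin.append_snoc]
    exact (realize_relAll (A := A) (φ := φ)).symm

variable (Ls A) in
def DecidedByRest (i : Fin k) (n : ℕ)
    (P : (α → Σ j, A j) → (Fin n → Σ j, A j) → (Σ j, A j) → Prop) : Prop :=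
  ∃ t : CaseTree ((bigLang k Ls).BoundedFormula α n)
      ((bigLang k Ls).BoundedFormula α (n + 1)),
    t.Labels IsBC (IsRel i) ∧
      ∀ v ys x, x.1 = i → (P v ys x ↔ t.Eval (·.Realize v ys) (·.Realize v (Fin.snoc ys x)))

namespace DecidedByRest

variable {i : Fin k} {n : ℕ} {P Q : (α → Σ j, A j) → (Fin n → Σ j, A j) → (Σ j, A j) → Prop}

theorem of_iff (hP : DecidedByRest Ls A i n P) (h : ∀ v ys x, P v ys x ↔ Q v ys x) :
    DecidedByRest Ls A i n Q := by
  obtain rfl : P = Q := by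
    funext v ys x
    exact propext (h v ys x)
  exact hP

theorem imp (hP : DecidedByRest Ls A i n P) (hQ : DecidedByRest Ls A i n Q) :
    DecidedByRest Ls A i n fun v ys x => P v ys x → Q v ys x := by
  obtain ⟨t, ht, hPt⟩ := hP
  obtain ⟨u, hu, hQu⟩ := hQ
  refine ⟨t.zipWith BoundedFormula.imp u,
    CaseTree.labels_zipWith (fun _ _ => IsRel.imp) ht hu, fun v ys x hx => ?_⟩
  beta_reduce
  rw [hPt v ys x hx, hQu v ys x hx,
    CaseTree.eval_zipWith (· → ·) fun _ _ => BoundedFormula.realize_imp]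

/-- The tests do not involve the pivot, so its quantifier passes to the leaves. -/
theorem exists_isBC_iff_forall (hP : DecidedByRest Ls A i n P) :
    ∃ χ : (bigLang k Ls).BoundedFormula α n, IsBC χ ∧
      ∀ v ys, χ.Realize v ys ↔ ∀ x : Σ j, A j, x.1 = i → P v ys x := by
  obtain ⟨t, ht, hPt⟩ := hP
  refine ⟨(t.map (relAll i)).toFormula,
    CaseTree.labels_fold IsBC (fun _ _ _ => IsBC.ifThenElse) (fun _ h => h)
      (CaseTree.labels_map ht fun _ h => IsBC.of i h.all), fun v ys => ?_⟩
  simp only [CaseTree.realize_toFormula, CaseTree.eval_map, Function.comp_def, realize_relAll,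
    CaseTree.eval_forall]
  exact forall_congr' fun x => forall_congr' fun hx => (hPt v ys x hx).symm

end DecidedByRest

theorem DecidedByPivot.decidedByRest {i i' : Fin k} {n : ℕ}
    {P : (α → Σ j, A j) → (Fin n → Σ j, A j) → (Σ j, A j) → (Fin 0 → Σ j, A j) → Prop}
    (hP : DecidedByPivot Ls A i i' n 0 P) :
    DecidedByRest Ls A i n fun v ys x => P v ys x Fin.elim0 := by
  obtain ⟨t, ht, hPt⟩ := hP
  refine ⟨t.transpose ifThenElse ⊤ ⊥,
    (CaseTree.labels_transpose (fun _ _ _ => IsRel.ifThenElse) IsRel.top IsRel.falsum ht).mono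
      (fun _ => IsBC.of i') fun _ h => h, fun v ys x hx => ?_⟩
  beta_reduce
  rw [hPt v ys x Fin.elim0 hx (·.elim0),
    CaseTree.eval_transpose (fun _ _ _ => realize_ifThenElse) (by simp) (by simp)]
  simp

theorem IsBC.decidedByRest (i : Fin k) {N : ℕ} {ψ : (bigLang k Ls).BoundedFormula α N}
    (hψ : IsBC ψ) (n : ℕ) (hN : N = n + 1) :
    DecidedByRest Ls A i n fun v ys x => ψ.Realize v (Fin.snoc ys x ∘ Fin.cast hN) := by
  induction hψ with
  | of i' hφ =>
    subst hN
    by_cases hi : i' = i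
    · subst hi
      exact ⟨.leaf _, hφ, fun _ _ _ _ => Iff.rfl⟩
    · exact (hφ.decidedByPivot (Ne.symm hi) 0 rfl).decidedByRest.of_iff fun v ys x => by simp
  | falsum => exact ⟨.leaf ⊥, .falsum, fun _ _ _ _ => Iff.rfl⟩
  | imp _ _ ih₁ ih₂ => exact ih₁.imp ih₂

theorem exists_isBC_iff {n : ℕ} (φ : (bigLang k Ls).BoundedFormula α n) :
    ∃ ψ : (bigLang k Ls).BoundedFormula α n, IsBC ψ ∧
      ∀ (v : α → Σ j, A j) (xs : Fin n → Σ j, A j), φ.Realize v xs ↔ ψ.Realize v xs := by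
  induction φ with
  | falsum => exact ⟨⊥, .falsum, fun _ _ => Iff.rfl⟩
  | equal t₁ t₂ =>
    rcases isEmpty_or_nonempty (Fin k) with hk | ⟨⟨i⟩⟩
    · obtain ⟨u, -⟩ := term_eq_var t₁
      exact ⟨⊥, .falsum, fun v xs => (hk.false (Sum.elim v xs u).1).elim⟩
    · exact ⟨_, .of i (.equal t₁ t₂), fun _ _ => Iff.rfl⟩
  | rel R ts =>
    rcases R with ⟨i, R⟩ | ⟨⟨rfl⟩, i⟩
    · exact ⟨_, .of i (.rel R ts), fun _ _ => Iff.rfl⟩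
    · exact ⟨_, .of i (.relR ts), fun _ _ => Iff.rfl⟩
  | imp _ _ ih₁ ih₂ =>
    obtain ⟨ψ₁, hψ₁, h₁⟩ := ih₁
    obtain ⟨ψ₂, hψ₂, h₂⟩ := ih₂
    exact ⟨ψ₁.imp ψ₂, hψ₁.imp hψ₂, fun v xs => imp_congr (h₁ v xs) (h₂ v xs)⟩
  | @all n φ ih =>
    obtain ⟨ψ, hψ, h⟩ := ih
    choose χ hχ hχψ using
      fun i => (hψ.decidedByRest (A := A) i n rfl).exists_isBC_iff_forall
    refine ⟨BoundedFormula.iInf χ, IsBC.iInf hχ, fun v xs => ?_⟩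
    simp only [BoundedFormula.realize_all, BoundedFormula.realize_iInf, hχψ, h, Fin.cast_refl,
      Function.comp_id]
    exact ⟨fun h _ x _ => h x, fun h x => h x.1 x rfl⟩

end Separation

/-- Every first-order formula in the language of the disjoint union `B` of `A₁, …, A_k`
(structures in pairwise disjoint relational languages, with unary domain predicates) is
equivalent in `B` to a Boolean combination of formulas each only involving quantifiers
relativized to a single sort `R_i` and relations of the corresponding `A_i`. -/
theorem boolean_combination_of_sorted (α : Type) (φ : (bigLang k Ls).Formula α) :
    ∃ ψ : (bigLang k Ls).Formula α, IsBC ψ ∧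
      ∀ v : α → Σ i, A i,
        (letI := bigStruct k Ls A; (φ.Realize v ↔ ψ.Realize v)) := by
  obtain ⟨ψ, hψ, h⟩ := exists_isBC_iff (A := A) φ
  exact ⟨ψ, hψ, fun v => h v default⟩

end Stmt5
end

section
/- Let G₀ ⊆ G₁ ⊆ … be defined as follows from a computable triple predicate: at each stage s, either G_s = G_t for the greatest t < s such that every element of G_t is still 'confirmed' at stage s, or G_s = G_{s-1} ∪ {one new confirmed element}. Define s ≤₁ t iff s ≤ t and G_s ⊆ G_t. Then ≤₁ satisfies: if s < t < u and s ≤₁ u, then s ≤₁ t. -/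
namespace StmtTS

/-- `x` appears to be labeled `ℓ` at stage `s` with witness `n`: `C x ℓ n m` has held for all
`m < s`, and `n` is the least such witness. -/
def Appears (C : ℕ → ℕ → ℕ → ℕ → Prop) (x ℓ n s : ℕ) : Prop :=
  (∀ m < s, C x ℓ n m) ∧ ∀ n' < n, ∃ m < s, ¬C x ℓ n' m

/-- `TrueStageSetup C rk G` axiomatizes the true-stage construction of the stagewise guess
sets `G s` of triples `(x, ℓ, n)` from the computable confirmation predicate `C`, relative to
a fixed effective enumeration of triples with rank function `rk` (triples with the same
`(x, ℓ)` appearing in increasing order of `n`):  `G 0 = ∅`, and at each stage `s + 1` we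
either roll back to `G t` for the greatest `t ≤ s` all of whose triples are still confirmed,
or (if no mistake appeared) add the least newly appearing triple, if any. -/
structure TrueStageSetup (C : ℕ → ℕ → ℕ → ℕ → Prop) (rk : ℕ × ℕ × ℕ → ℕ)
    (G : ℕ → Set (ℕ × ℕ × ℕ)) : Prop where
  comp : ComputablePred fun q : (ℕ × ℕ × ℕ) × ℕ => C q.1.1 q.1.2.1 q.1.2.2 q.2
  rk_comp : Computable rk
  rk_inj : Function.Injective rk
  rk_mono : ∀ x ℓ n n', n < n' → rk (x, ℓ, n) < rk (x, ℓ, n')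
  init : G 0 = ∅
  step : ∀ s : ℕ,
    ((∃ q ∈ G s, ¬Appears C q.1 q.2.1 q.2.2 (s + 1)) ∧
      ∃ t ≤ s, (∀ q ∈ G t, Appears C q.1 q.2.1 q.2.2 (s + 1)) ∧
        (∀ t' ≤ s, (∀ q ∈ G t', Appears C q.1 q.2.1 q.2.2 (s + 1)) → t' ≤ t) ∧
        G (s + 1) = G t) ∨
    ((∀ q ∈ G s, Appears C q.1 q.2.1 q.2.2 (s + 1)) ∧
      ((G (s + 1) = G s ∧ ∀ q ∉ G s, ¬Appears C q.1 q.2.1 q.2.2 (s + 1)) ∨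
        (∃ q ∉ G s, Appears C q.1 q.2.1 q.2.2 (s + 1) ∧ G (s + 1) = insert q (G s) ∧
          ∀ q' ∉ G s, Appears C q'.1 q'.2.1 q'.2.2 (s + 1) → rk q ≤ rk q')))
  finite : ∀ s, (G s).Finite

/-- `s ≤₁ t`: `s ≤ t` and `G s ⊆ G t`. -/
def Le1 (G : ℕ → Set (ℕ × ℕ × ℕ)) (s t : ℕ) : Prop := s ≤ t ∧ G s ⊆ G t

/-- A stage `s` is a true stage if `s ≤₁ t` for all `t > s` (equivalently, all `t ≥ s`). -/
def TrueStage (G : ℕ → Set (ℕ × ℕ × ℕ)) (s : ℕ) : Prop := ∀ t, s ≤ t → G s ⊆ G t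

end StmtTS

/-!
Appearing with a fixed witness is an interval condition on the stage: the confirmations `C`
must hold below the stage and the smaller witnesses must have failed below it. Every triple of
`G s` appears at stage `s`, so if `G s ⊆ G u` the triples of `G s` appear at every stage
between `s` and `u`. Hence a rollback at such a stage never returns below `s`, and strong
induction gives `G s ⊆ G r` for all `s ≤ r ≤ u`.
-/

namespace StmtTS

variable {C : ℕ → ℕ → ℕ → ℕ → Prop} {rk : ℕ × ℕ × ℕ → ℕ} {G : ℕ → Set (ℕ × ℕ × ℕ)}

theorem Appears.of_le_of_le {x ℓ n a b r : ℕ} (ha : Appears C x ℓ n a) (hb : Appears C x ℓ n b)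
    (har : a ≤ r) (hrb : r ≤ b) : Appears C x ℓ n r := by
  refine ⟨fun m hm => hb.1 m (hm.trans_le hrb), fun n' hn' => ?_⟩
  obtain ⟨m, hm, hfail⟩ := ha.2 n' hn'
  exact ⟨m, hm.trans_le har, hfail⟩

namespace TrueStageSetup

theorem subset_succ_or_rollback (H : TrueStageSetup C rk G) (r : ℕ) :
    G r ⊆ G (r + 1) ∨
      ∃ t ≤ r, (∀ t' ≤ r, (∀ q ∈ G t', Appears C q.1 q.2.1 q.2.2 (r + 1)) → t' ≤ t) ∧
        G (r + 1) = G t := by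
  rcases H.step r with ⟨-, t, ht, -, hmax, hG⟩ | ⟨-, ⟨hG, -⟩ | ⟨q, -, -, hG, -⟩⟩
  · exact .inr ⟨t, ht, hmax, hG⟩
  · exact .inl hG.ge
  · exact .inl (hG ▸ Set.subset_insert q (G r))

theorem appears_of_mem (H : TrueStageSetup C rk G) :
    ∀ s, ∀ q ∈ G s, Appears C q.1 q.2.1 q.2.2 s
  | 0, q, hq => by simp [H.init] at hq
  | s + 1, q, hq => by
    rcases H.step s with ⟨-, t, -, hall, -, hG⟩ | ⟨hall, ⟨hG, -⟩ | ⟨q₀, -, hq₀, hG, -⟩⟩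
    · exact hall q (hG ▸ hq)
    · exact hall q (hG ▸ hq)
    · rcases (hG ▸ hq : q ∈ insert q₀ (G s)) with rfl | hq
      · exact hq₀
      · exact hall q hq

theorem subset_of_subset_of_le_of_le (H : TrueStageSetup C rk G) {s u : ℕ} (hsu : G s ⊆ G u) :
    ∀ r, s ≤ r → r ≤ u → G s ⊆ G r := by
  intro r
  induction r using Nat.strong_induction_on with
  | _ r ih =>
    intro hsr hru
    rcases hsr.eq_or_lt with rfl | hlt
    · exact subset_rfl
    obtain ⟨r, rfl⟩ := Nat.exists_eq_add_one_of_ne_zero (by omega : r ≠ 0)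
    have hsr : s ≤ r := Nat.lt_succ_iff.mp hlt
    rcases H.subset_succ_or_rollback r with hsucc | ⟨t, htr, hmax, hG⟩
    · exact (ih r r.lt_succ_self hsr (by omega)).trans hsucc
    · have happ : ∀ q ∈ G s, Appears C q.1 q.2.1 q.2.2 (r + 1) := fun q hq =>
        (H.appears_of_mem s q hq).of_le_of_le (H.appears_of_mem u q (hsu hq)) (by omega) hru
      rw [hG]
      exact ih t (by omega) (hmax s hsr happ) (by omega)

end TrueStageSetup

end StmtTS

open StmtTS in
/-- In the true-stage construction: if `s < t < u` and `s ≤₁ u`, then `s ≤₁ t`. -/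
theorem le1_of_le1_of_between (C : ℕ → ℕ → ℕ → ℕ → Prop) (rk : ℕ × ℕ × ℕ → ℕ)
    (G : ℕ → Set (ℕ × ℕ × ℕ)) (H : TrueStageSetup C rk G)
    (s t u : ℕ) (hst : s < t) (htu : t < u) (hsu : Le1 G s u) : Le1 G s t :=
  ⟨hst.le, H.subset_of_subset_of_le_of_le hsu.2 t hst.le htu.le⟩
end

section
/- With G_s and ≤₁ as in the true-stage construction, call s a true stage if s ≤₁ t for all t > s. Then there are infinitely many true stages. -/
/-!
If every triple of `G t` is still confirmed at a stage `u ≥ t`, then `G t ⊆ G u`: no rollback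
between `t` and `u` can go below `t`. Hence `t` is a true stage iff its triples stay confirmed
forever. Now let `t` be true and suppose `t + 1` is not, and let `d + 1` be the first stage at
which some triple of `G (t + 1)` is no longer confirmed. Then `G (t + 1) ⊆ G d`, so stage
`d + 1` rolls back, to a stage that is at least `t` (as `G t` is confirmed forever) and not
above `t` (as `G (t + 1)` is not confirmed). So `G (d + 1) = G t`, and `d + 1` is true.
-/

namespace StmtTS

variable {C : ℕ → ℕ → ℕ → ℕ → Prop} {rk : ℕ × ℕ × ℕ → ℕ} {G : ℕ → Set (ℕ × ℕ × ℕ)}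

theorem Appears.of_le {x ℓ n s u : ℕ} (h : Appears C x ℓ n s) (hsu : s ≤ u)
    (hC : ∀ m < u, C x ℓ n m) : Appears C x ℓ n u :=
  ⟨hC, fun n' hn' => (h.2 n' hn').imp fun _ ⟨hm, hnC⟩ => ⟨hm.trans_le hsu, hnC⟩⟩

def Confirmed (C : ℕ → ℕ → ℕ → ℕ → Prop) (G : ℕ → Set (ℕ × ℕ × ℕ)) (t u : ℕ) : Prop :=
  ∀ q ∈ G t, Appears C q.1 q.2.1 q.2.2 u

theorem trueStage_of_eq {t u : ℕ} (ht : TrueStage G t) (htu : t ≤ u) (h : G u = G t) :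
    TrueStage G u := fun v huv => h ▸ ht v (htu.trans huv)

namespace TrueStageSetup

theorem confirmed_self (H : TrueStageSetup C rk G) (s : ℕ) : Confirmed C G s s := by
  cases s with
  | zero => simp [Confirmed, H.init]
  | succ n =>
    rcases H.step n with ⟨_, t, _, hconf, _, hG⟩ | ⟨hconf, ⟨hG, _⟩ | ⟨q₀, _, hq₀, hG, _⟩⟩
    all_goals rw [Confirmed, hG]
    · exact hconf
    · exact hconf
    · exact Set.forall_mem_insert.2 ⟨hq₀, hconf⟩

theorem confirmed_of_le_of_le (H : TrueStageSetup C rk G) {t u v : ℕ} (h : Confirmed C G t u)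
    (htv : t ≤ v) (hvu : v ≤ u) : Confirmed C G t v := fun q hq =>
  (H.confirmed_self t q hq).of_le htv fun m hm => (h q hq).1 m (hm.trans_le hvu)

theorem subset_succ_of_confirmed (H : TrueStageSetup C rk G) {s : ℕ}
    (h : Confirmed C G s (s + 1)) : G s ⊆ G (s + 1) := by
  rcases H.step s with ⟨⟨q, hq, hnq⟩, _⟩ | ⟨_, ⟨hG, _⟩ | ⟨q₀, _, _, hG, _⟩⟩
  · exact absurd (h q hq) hnq
  · exact hG.symm.subset
  · exact hG ▸ Set.subset_insert _ _

theorem exists_rollback (H : TrueStageSetup C rk G) {s : ℕ} (h : ¬Confirmed C G s (s + 1)) :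
    ∃ t ≤ s, Confirmed C G t (s + 1) ∧ (∀ t' ≤ s, Confirmed C G t' (s + 1) → t' ≤ t) ∧
      G (s + 1) = G t := by
  rcases H.step s with ⟨_, t, hts, hconf, hmax, hG⟩ | ⟨hconf, _⟩
  · exact ⟨t, hts, hconf, hmax, hG⟩
  · exact absurd hconf h

theorem subset_of_confirmed (H : TrueStageSetup C rk G) {t s : ℕ} (hts : t ≤ s)
    (h : Confirmed C G t s) : G t ⊆ G s := by
  induction s using Nat.strong_induction_on generalizing t with
  | _ s ih =>
    obtain rfl | hlt := hts.eq_or_lt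
    · exact subset_rfl
    obtain ⟨n, rfl⟩ : ∃ n, s = n + 1 := ⟨s - 1, by omega⟩
    have htn : t ≤ n := Nat.le_of_lt_succ hlt
    by_cases hn : Confirmed C G n (n + 1)
    · exact (ih n n.lt_succ_self htn (H.confirmed_of_le_of_le h htn n.le_succ)).trans
        (H.subset_succ_of_confirmed hn)
    · obtain ⟨t₀, ht₀n, -, hmax, hG⟩ := H.exists_rollback hn
      have htt₀ : t ≤ t₀ := hmax t htn h
      exact hG ▸ ih t₀ (Nat.lt_succ_of_le ht₀n) htt₀
        (H.confirmed_of_le_of_le h htt₀ (ht₀n.trans n.le_succ))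

theorem trueStage_iff_forall_confirmed (H : TrueStageSetup C rk G) {t : ℕ} :
    TrueStage G t ↔ ∀ u, t ≤ u → Confirmed C G t u := by
  refine ⟨fun ht u htu q hq => ?_, fun h u htu => H.subset_of_confirmed htu (h u htu)⟩
  refine (H.confirmed_self t q hq).of_le htu fun m _ => ?_
  have hq' : q ∈ G (max t (m + 1)) := ht _ (le_max_left _ _) hq
  exact (H.confirmed_self _ q hq').1 m (Nat.lt_succ_self m |>.trans_le (le_max_right _ _))

theorem exists_trueStage_gt (H : TrueStageSetup C rk G) {t : ℕ} (ht : TrueStage G t) :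
    ∃ u, t < u ∧ TrueStage G u := by
  classical
  by_cases ht₁ : TrueStage G (t + 1)
  · exact ⟨t + 1, t.lt_succ_self, ht₁⟩
  have hfail : ∃ u, t + 1 ≤ u ∧ ¬Confirmed C G (t + 1) u := by
    simpa [H.trueStage_iff_forall_confirmed] using ht₁
  obtain ⟨u, ⟨htu, hnconf⟩, hmin⟩ : ∃ u, (t + 1 ≤ u ∧ ¬Confirmed C G (t + 1) u) ∧
      ∀ v < u, ¬(t + 1 ≤ v ∧ ¬Confirmed C G (t + 1) v) :=
    ⟨Nat.find hfail, Nat.find_spec hfail, fun _ => Nat.find_min hfail⟩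
  have hne : u ≠ t + 1 := by
    rintro rfl
    exact hnconf (H.confirmed_self _)
  obtain ⟨d, rfl⟩ : ∃ d, u = d + 1 := ⟨u - 1, by omega⟩
  have htd : t + 1 ≤ d := by omega
  have hsub : ∀ v, t + 1 ≤ v → v ≤ d → G (t + 1) ⊆ G v :=
    fun v hv hvd => H.subset_of_confirmed hv
      (not_not.1 fun hnv => hmin v (Nat.lt_succ_of_le hvd) ⟨hv, hnv⟩)
  have hd_conf : ¬Confirmed C G d (d + 1) :=
    fun h => hnconf fun q hq => h q (hsub d htd le_rfl hq)
  obtain ⟨t₀, ht₀d, hconf₀, hmax, hG⟩ := H.exists_rollback hd_conf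
  have ht_le : t ≤ t₀ := hmax t (by omega) (H.trueStage_iff_forall_confirmed.1 ht _ (by omega))
  have hle_t : t₀ ≤ t := by
    by_contra! hlt
    exact hnconf fun q hq => hconf₀ q (hsub t₀ hlt ht₀d hq)
  obtain rfl := le_antisymm hle_t ht_le
  exact ⟨d + 1, by omega, trueStage_of_eq ht (by omega) hG⟩

end TrueStageSetup

end StmtTS

open StmtTS in
/-- In the true-stage construction there are infinitely many true stages. -/
theorem infinitely_many_true_stages (C : ℕ → ℕ → ℕ → ℕ → Prop) (rk : ℕ × ℕ × ℕ → ℕ)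
    (G : ℕ → Set (ℕ × ℕ × ℕ)) (H : TrueStageSetup C rk G) :
    ∀ s : ℕ, ∃ t, s < t ∧ TrueStage G t := by
  have hunbounded : ∀ s, ∃ t, s ≤ t ∧ TrueStage G t := by
    intro s
    induction s with
    | zero => exact ⟨0, le_rfl, fun u _ => by simp [H.init]⟩
    | succ s ih =>
      obtain ⟨t, hst, ht⟩ := ih
      obtain ⟨u, htu, hu⟩ := H.exists_trueStage_gt ht
      exact ⟨u, by omega, hu⟩
  exact fun s => hunbounded (s + 1)
end
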